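/- arXiv:1210.4631 — 3 statements merged into one kernel-verified Lean document; each statement's English description precedes it below -/
import Mathlib

section
/- Let F be a field, h ∈ F[x] with deg h ≥ 1, and let θ : A_h → A_g be an F-algebra isomorphism for some g ∈ F[x]. Then θ(h) = λg for some λ ∈ F*. -/
open Polynomial FreeAlgebra

/-- The defining relation of `A_h`: `y * x = x * y + h(x)`. -/
inductive ahRel (F : Type) [Field F] (h : F[X]) :
    FreeAlgebra F (Fin 2) → FreeAlgebra F (Fin 2) → Prop
  | rel : ahRel F h (ι F 1 * ι F 0) (ι F 0 * ι F 1 + aeval (ι F 0) h)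

/-- The algebra `A_h` generated by `x, y` with `yx - xy = h(x)`. -/
noncomputable abbrev AW (F : Type) [Field F] (h : F[X]) := RingQuot (ahRel F h)

/-- The generator `x` of `A_h`. -/
noncomputable def aX (F : Type) [Field F] (h : F[X]) : AW F h :=
  RingQuot.mkAlgHom F (ahRel F h) (ι F 0)

/-- The generator `y` of `A_h`. -/
noncomputable def aY (F : Type) [Field F] (h : F[X]) : AW F h :=
  RingQuot.mkAlgHom F (ahRel F h) (ι F 1)

namespace Stmt17Aux

variable {F : Type} [Field F]

/-- `F[x][t]`: outer variable is `t`, inner is `x`. -/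
abbrev PP (F : Type) [Field F] := Polynomial (Polynomial F)

lemma lmul_app (a b : PP F) : Algebra.lmul F (PP F) a b = a * b := rfl

/-- coefficientwise `p ↦ g * p'`. -/
noncomputable def Dop (g : F[X]) : PP F →ₗ[F] PP F where
  toFun v := ⟨AddMonoidAlgebra.ofCoeff
    (Finsupp.mapRange (fun p => g * derivative p) (by simp) v.toFinsupp.coeff)⟩
  map_add' a b := by
    refine Polynomial.ext fun n => ?_
    rw [Polynomial.coeff_add]
    show g * derivative ((a + b).coeff n) = g * derivative (a.coeff n) + g * derivative (b.coeff n)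
    rw [Polynomial.coeff_add, derivative_add, mul_add]
  map_smul' c a := by
    refine Polynomial.ext fun n => ?_
    rw [RingHom.id_apply, Polynomial.coeff_smul]
    show g * derivative ((c • a).coeff n) = c • (g * derivative (a.coeff n))
    rw [Polynomial.coeff_smul, derivative_smul, mul_smul_comm]

lemma coeff_Dop (g : F[X]) (v : PP F) (n : ℕ) :
    (Dop g v).coeff n = g * derivative (v.coeff n) := by
  rfl

lemma Dop_C_mul (g p : F[X]) (v : PP F) :
    Dop g (C p * v) = C (g * derivative p) * v + C p * Dop g v := by
  refine Polynomial.ext fun n => ?_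
  simp only [coeff_Dop, coeff_C_mul, coeff_add, derivative_mul]
  ring

noncomputable def OX (F : Type) [Field F] : Module.End F (PP F) :=
  Algebra.lmul F (PP F) (C X)

noncomputable def OY (g : F[X]) : Module.End F (PP F) :=
  Algebra.lmul F (PP F) X + Dop g

lemma CX_eq : (C X : PP F) = (IsScalarTower.toAlgHom F F[X] (PP F)) X := by
  simp [IsScalarTower.toAlgHom_apply, Polynomial.algebraMap_eq]

lemma aeval_CX (p : F[X]) : aeval (C X : PP F) p = C p := by
  rw [CX_eq, Polynomial.aeval_algHom_apply, Polynomial.aeval_X_left_apply]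
  simp [IsScalarTower.toAlgHom_apply, Polynomial.algebraMap_eq]

lemma aeval_OX (p : F[X]) : aeval (OX F) p = Algebra.lmul F (PP F) (C p) := by
  rw [OX, Polynomial.aeval_algHom_apply, aeval_CX]

lemma rel_op (g : F[X]) : OY g * OX F = OX F * OY g + aeval (OX F) g := by
  rw [aeval_OX]
  apply LinearMap.ext; intro v
  simp only [Module.End.mul_apply, OX, OY, LinearMap.add_apply, lmul_app, map_add,
    Dop_C_mul, derivative_X, mul_one]
  ring

noncomputable def rep (g : F[X]) : AW F g →ₐ[F] Module.End F (PP F) :=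
  RingQuot.liftAlgHom F ⟨FreeAlgebra.lift F ![OX F, OY g], by
    rintro a b ⟨⟩
    simp only [map_mul, map_add, lift_ι_apply, Matrix.cons_val_zero, Matrix.cons_val_one,
      Matrix.head_cons, ← Polynomial.aeval_algHom_apply]
    exact rel_op g⟩

lemma rep_aX (g : F[X]) : rep g (aX F g) = OX F := by
  rw [aX, rep, RingQuot.liftAlgHom_mkAlgHom_apply, lift_ι_apply]
  rfl

lemma rep_aY (g : F[X]) : rep g (aY F g) = OY g := by
  rw [aY, rep, RingQuot.liftAlgHom_mkAlgHom_apply, lift_ι_apply]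
  rfl

noncomputable def eps (g : F[X]) : AW F g →ₗ[F] PP F :=
  (LinearMap.applyₗ (1 : PP F)).comp (rep g).toLinearMap

lemma eps_apply (g : F[X]) (u : AW F g) : eps g u = rep g u 1 := rfl

lemma rep_aeval (g p : F[X]) :
    rep g (aeval (aX F g) p) = Algebra.lmul F (PP F) (C p) := by
  rw [← Polynomial.aeval_algHom_apply, rep_aX, aeval_OX]

lemma Dop_X_pow (g : F[X]) (j : ℕ) : Dop g ((X : PP F) ^ j) = 0 := by
  ext n
  simp [coeff_Dop, coeff_X_pow, apply_ite derivative]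

lemma OY_pow_one (g : F[X]) (j : ℕ) : ((OY g) ^ j) 1 = (X : PP F) ^ j := by
  induction j with
  | zero => simp
  | succ j ih =>
    rw [pow_succ', Module.End.mul_apply, ih, OY, LinearMap.add_apply, lmul_app, Dop_X_pow,
      add_zero, ← pow_succ']

lemma eps_basis (g p : F[X]) (j : ℕ) :
    eps g (aeval (aX F g) p * (aY F g) ^ j) = C p * X ^ j := by
  rw [eps_apply, map_mul, map_pow, rep_aeval, rep_aY, Module.End.mul_apply, OY_pow_one, lmul_app]

noncomputable def Psi (g : F[X]) : PP F →ₗ[F] AW F g where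
  toFun w := w.sum fun j p => aeval (aX F g) p * (aY F g) ^ j
  map_add' a b := by
    apply Polynomial.sum_add_index
    · intro i; simp
    · intro i a b; simp [add_mul]
  map_smul' c a := by
    rw [Polynomial.sum_smul_index' (hf := fun i => by simp)]
    simp only [map_smul, smul_mul_assoc, RingHom.id_apply]
    rw [Polynomial.sum_def, Polynomial.sum_def, Finset.smul_sum]

lemma Psi_monomial (g p : F[X]) (j : ℕ) :
    Psi g (C p * X ^ j) = aeval (aX F g) p * (aY F g) ^ j := by
  rw [C_mul_X_pow_eq_monomial]
  exact Polynomial.sum_monomial_index p (fun j q => aeval (aX F g) q * (aY F g) ^ j) (by simp)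

lemma eps_Psi (g : F[X]) (w : PP F) : eps g (Psi g w) = w := by
  induction w using Polynomial.induction_on' with
  | add p q hp hq => rw [map_add, map_add, hp, hq]
  | monomial n a => rw [← C_mul_X_pow_eq_monomial, Psi_monomial, eps_basis]

def ZSet (g : F[X]) : Set (AW F g) :=
  {z | ∃ (p : F[X]) (j : ℕ), z = aeval (aX F g) p * (aY F g) ^ j}

lemma rel_AW (g : F[X]) :
    aY F g * aX F g = aX F g * aY F g + aeval (aX F g) g := by
  have := RingQuot.mkAlgHom_rel F (ahRel.rel (F := F) (h := g))
  simpa [map_mul, map_add, aX, aY, ← Polynomial.aeval_algHom_apply] using this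

lemma comm1 (g q : F[X]) :
    aY F g * aeval (aX F g) q
      = aeval (aX F g) q * aY F g + aeval (aX F g) (g * derivative q) := by
  induction q using Polynomial.induction_on with
  | C a => simp [Algebra.commutes]
  | add p q hp hq =>
    simp only [map_add, mul_add, add_mul, hp, hq, derivative_add]
    abel
  | monomial n a ih =>
    have e1 : (C a * X ^ (n + 1) : F[X]) = (C a * X ^ n) * X := by ring
    rw [e1, map_mul, aeval_X, ← mul_assoc, ih, add_mul, mul_assoc, rel_AW]
    have e2 : (g * derivative (C a * X ^ n * X) : F[X])
        = (C a * X ^ n) * g + (g * derivative (C a * X ^ n)) * X := by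
      rw [derivative_mul, derivative_X]; ring
    rw [e2, map_add]
    simp only [map_mul, aeval_X]
    noncomm_ring

lemma mul_mem_span (g : F[X]) (j : ℕ) :
    ∀ (p q : F[X]) (k : ℕ),
      (aeval (aX F g) p * (aY F g) ^ j) * (aeval (aX F g) q * (aY F g) ^ k)
        ∈ Submodule.span F (ZSet g) := by
  induction j with
  | zero =>
    intro p q k
    apply Submodule.subset_span
    exact ⟨p * q, k, by rw [pow_zero, mul_one, map_mul, mul_assoc]⟩
  | succ j ih =>
    intro p q k
    have key : (aeval (aX F g) p * (aY F g) ^ (j + 1)) * (aeval (aX F g) q * (aY F g) ^ k)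
        = (aeval (aX F g) p * (aY F g) ^ j) * (aeval (aX F g) q * (aY F g) ^ (k + 1))
          + (aeval (aX F g) p * (aY F g) ^ j)
            * (aeval (aX F g) (g * derivative q) * (aY F g) ^ k) := by
      rw [pow_succ]
      calc aeval (aX F g) p * ((aY F g) ^ j * aY F g) * (aeval (aX F g) q * (aY F g) ^ k)
          = aeval (aX F g) p * (aY F g) ^ j
              * ((aY F g * aeval (aX F g) q) * (aY F g) ^ k) := by
            noncomm_ring
        _ = _ := by
            rw [comm1, pow_succ]
            noncomm_ring
            simp only [← pow_succ, ← pow_succ']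
            exact add_comm _ _
    rw [key]
    exact add_mem (ih p q (k + 1)) (ih p (g * derivative q) k)

lemma span_top (g : F[X]) : Submodule.span F (ZSet g) = ⊤ := by
  have hmul : ∀ a ∈ Submodule.span F (ZSet g), ∀ b ∈ Submodule.span F (ZSet g),
      a * b ∈ Submodule.span F (ZSet g) := by
    intro a ha b hb
    induction ha using Submodule.span_induction with
    | mem z hz =>
      obtain ⟨p, j, rfl⟩ := hz
      induction hb using Submodule.span_induction with
      | mem z' hz' =>
        obtain ⟨q, k, rfl⟩ := hz'
        exact mul_mem_span g j p q k
      | zero => simp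
      | add u v _ _ hu hv => rw [mul_add]; exact add_mem hu hv
      | smul c u _ hu => rw [mul_smul_comm]; exact Submodule.smul_mem _ c hu
    | zero => simp
    | add u v _ _ hu hv => rw [add_mul]; exact add_mem hu hv
    | smul c u _ hu => rw [smul_mul_assoc]; exact Submodule.smul_mem _ c hu
  have h1 : (1 : AW F g) ∈ Submodule.span F (ZSet g) :=
    Submodule.subset_span ⟨1, 0, by simp⟩
  rw [eq_top_iff]
  rintro u -
  obtain ⟨w, rfl⟩ := RingQuot.mkAlgHom_surjective F (ahRel F g) u
  induction w using FreeAlgebra.induction with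
  | grade0 r =>
    rw [AlgHom.commutes, Algebra.algebraMap_eq_smul_one]
    exact Submodule.smul_mem _ r h1
  | grade1 i =>
    fin_cases i
    · exact Submodule.subset_span ⟨X, 0, by simp [aX]⟩
    · exact Submodule.subset_span ⟨1, 1, by simp [aY]⟩
  | mul a b ha hb => rw [map_mul]; exact hmul _ ha _ hb
  | add a b ha hb => rw [map_add]; exact add_mem ha hb

lemma Psi_eps (g : F[X]) (u : AW F g) : Psi g (eps g u) = u := by
  have : (Psi g).comp (eps g) = LinearMap.id := by
    apply LinearMap.ext_on (span_top g)
    rintro z ⟨p, j, rfl⟩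
    simp [eps_basis, Psi_monomial]
  exact DFunLike.congr_fun this u

lemma eps_inj (g : F[X]) : Function.Injective (eps g) := by
  intro a b hab
  rw [← Psi_eps g a, hab, Psi_eps]

lemma eps_mul (g : F[X]) (a b : AW F g) : eps g (a * b) = rep g a (eps g b) := by
  rw [eps_apply, map_mul, Module.End.mul_apply, eps_apply]

/- degree lemmas -/

lemma Dop_degree (g : F[X]) (v : PP F) : (Dop g v).degree ≤ v.degree := by
  rw [Polynomial.degree_le_iff_coeff_zero]
  intro m hm
  rw [coeff_Dop, Polynomial.coeff_eq_zero_of_degree_lt hm]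
  simp

lemma OY_apply (g : F[X]) (v : PP F) : OY g v = X * v + Dop g v := rfl

lemma OY_pow_degree (g : F[X]) (j : ℕ) (v : PP F) :
    (((OY g) ^ j) v).degree ≤ v.degree + j := by
  induction j with
  | zero => simp
  | succ j ih =>
    rw [pow_succ', Module.End.mul_apply, OY_apply]
    refine le_trans (Polynomial.degree_add_le _ _) (max_le ?_ ?_)
    · refine le_trans (Polynomial.degree_mul_le _ _) ?_
      rw [Polynomial.degree_X]
      calc (1 : WithBot ℕ) + (((OY g) ^ j) v).degree ≤ 1 + (v.degree + j) := by
            exact add_le_add_right ih 1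
        _ = v.degree + (j + 1 : ℕ) := by push_cast; ring
    · refine le_trans (Dop_degree g _) (le_trans ih ?_)
      calc v.degree + (j : WithBot ℕ) ≤ v.degree + (j + 1 : ℕ) := by
            apply add_le_add_right; exact_mod_cast Nat.le_succ j

lemma OY_pow_coeff (g : F[X]) (j : ℕ) (v : PP F) (n : ℕ) (hn : v.degree ≤ n) :
    (((OY g) ^ j) v).coeff (n + j) = v.coeff n := by
  induction j with
  | zero => simp
  | succ j ih =>
    have hlt : (((OY g) ^ j) v).degree < ((n + j + 1 : ℕ) : WithBot ℕ) := by
      calc (((OY g) ^ j) v).degree ≤ v.degree + j := OY_pow_degree g j v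
        _ ≤ (n : WithBot ℕ) + j := add_le_add_left hn _
        _ < ((n + j + 1 : ℕ) : WithBot ℕ) := by exact_mod_cast Nat.lt_succ_self (n + j)
    rw [pow_succ', Module.End.mul_apply, OY_apply, coeff_add, ← add_assoc,
      Polynomial.coeff_X_mul, ih, coeff_Dop,
      Polynomial.coeff_eq_zero_of_degree_lt hlt, derivative_zero, mul_zero, add_zero]

lemma rep_Psi_apply (g : F[X]) (w v : PP F) :
    rep g (Psi g w) v = ∑ j ∈ w.support, C (w.coeff j) * (((OY g) ^ j) v) := by
  have : Psi g w = ∑ j ∈ w.support, aeval (aX F g) (w.coeff j) * (aY F g) ^ j := rfl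
  rw [this, map_sum, LinearMap.sum_apply]
  apply Finset.sum_congr rfl
  intro j _
  rw [map_mul, map_pow, rep_aeval, rep_aY, Module.End.mul_apply, lmul_app]

lemma key_coeff (g : F[X]) (w v : PP F) (hw : w ≠ 0) (hv : v ≠ 0) :
    (rep g (Psi g w) v).coeff (w.natDegree + v.natDegree)
      = w.leadingCoeff * v.leadingCoeff := by
  rw [rep_Psi_apply, Polynomial.finset_sum_coeff]
  rw [Finset.sum_eq_single w.natDegree]
  · rw [coeff_C_mul, add_comm, OY_pow_coeff g _ v _ (Polynomial.degree_le_natDegree)]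
    rfl
  · intro j hj hjne
    have hjlt : j < w.natDegree :=
      lt_of_le_of_ne (Polynomial.le_natDegree_of_mem_supp j hj) hjne
    have hlt : (((OY g) ^ j) v).degree < ((w.natDegree + v.natDegree : ℕ) : WithBot ℕ) := by
      calc (((OY g) ^ j) v).degree ≤ v.degree + j := OY_pow_degree g j v
        _ ≤ (v.natDegree : WithBot ℕ) + j := add_le_add_left Polynomial.degree_le_natDegree _
        _ < ((w.natDegree + v.natDegree : ℕ) : WithBot ℕ) := by
            exact_mod_cast by omega
    rw [coeff_C_mul, Polynomial.coeff_eq_zero_of_degree_lt hlt, mul_zero]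
  · intro hns
    exact absurd (Polynomial.natDegree_mem_support_of_nonzero hw) hns

lemma eps_one (g : F[X]) : eps g (1 : AW F g) = 1 := by
  have h1 : rep g (1 : AW F g) = 1 := map_one _
  rw [eps_apply, h1]; rfl

lemma one_ne_zero' (g : F[X]) : (1 : AW F g) ≠ 0 := by
  intro h
  have := eps_one g
  rw [h, map_zero] at this
  exact one_ne_zero this.symm

lemma AW_nzd (g : F[X]) {a b : AW F g} (ha : a ≠ 0) (hb : b ≠ 0) : a * b ≠ 0 := by
  intro hab
  have hea : eps g a ≠ 0 := fun h => ha (by rw [← Psi_eps g a, h, map_zero])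
  have heb : eps g b ≠ 0 := fun h => hb (by rw [← Psi_eps g b, h, map_zero])
  have h0 : eps g (a * b) = 0 := by rw [hab, map_zero]
  have this := key_coeff g (eps g a) (eps g b) hea heb
  have e2 : rep g (Psi g (eps g a)) = rep g a := by rw [Psi_eps]
  rw [e2, ← eps_mul, h0] at this
  simp only [coeff_zero] at this
  exact Polynomial.leadingCoeff_ne_zero.mpr hea
    (by
      have := mul_eq_zero.mp this.symm
      rcases this with h | h
      · exact h
      · exact absurd h (Polynomial.leadingCoeff_ne_zero.mpr heb))

lemma unit_scalar (g : F[X]) {a b : AW F g} (hab : a * b = 1) :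
    ∃ l : F, l ≠ 0 ∧ a = l • 1 := by
  have ha : a ≠ 0 := by rintro rfl; rw [zero_mul] at hab; exact one_ne_zero' g hab.symm
  have hb : b ≠ 0 := by rintro rfl; rw [mul_zero] at hab; exact one_ne_zero' g hab.symm
  have hea : eps g a ≠ 0 := fun h => ha (by rw [← Psi_eps g a, h, map_zero])
  have heb : eps g b ≠ 0 := fun h => hb (by rw [← Psi_eps g b, h, map_zero])
  have hc := key_coeff g (eps g a) (eps g b) hea heb
  have e2 : rep g (Psi g (eps g a)) = rep g a := by rw [Psi_eps]
  rw [e2, ← eps_mul, hab, eps_one] at hc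
  have hlc : (eps g a).leadingCoeff * (eps g b).leadingCoeff ≠ 0 :=
    mul_ne_zero (Polynomial.leadingCoeff_ne_zero.mpr hea)
      (Polynomial.leadingCoeff_ne_zero.mpr heb)
  have hdeg : (eps g a).natDegree + (eps g b).natDegree = 0 := by
    by_contra hne
    rw [Polynomial.coeff_one, if_neg hne] at hc
    exact hlc hc.symm
  have hda : (eps g a).natDegree = 0 := by omega
  have hdb : (eps g b).natDegree = 0 := by omega
  have hCa : eps g a = C ((eps g a).coeff 0) := Polynomial.eq_C_of_natDegree_eq_zero hda
  have hCb : eps g b = C ((eps g b).coeff 0) := Polynomial.eq_C_of_natDegree_eq_zero hdb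
  set pa := (eps g a).coeff 0
  set pb := (eps g b).coeff 0
  have haa : a = aeval (aX F g) pa := by
    rw [← Psi_eps g a, hCa]
    have := Psi_monomial g pa 0
    simpa using this
  have hbb : b = aeval (aX F g) pb := by
    rw [← Psi_eps g b, hCb]
    have := Psi_monomial g pb 0
    simpa using this
  have hmul : pa * pb = 1 := by
    have : eps g (a * b) = C pa * C pb := by
      rw [eps_mul, haa, rep_aeval, hCb, lmul_app]
    rw [hab, eps_one] at this
    have : C (pa * pb) = C (1 : F[X]) := by rw [map_mul]; simpa using this.symm
    exact C_injective this
  have hunit : IsUnit pa := IsUnit.of_mul_eq_one _ hmul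
  obtain ⟨l, hl, hCl⟩ := Polynomial.isUnit_iff.mp hunit
  refine ⟨l, hl.ne_zero, ?_⟩
  rw [haa, ← hCl, aeval_C, Algebra.algebraMap_eq_smul_one]

/- commutative quotient -/

noncomputable def piQ (g : F[X]) :
    AW F g →ₐ[F] (PP F ⧸ Ideal.span {(C g : PP F)}) :=
  RingQuot.liftAlgHom F ⟨(Ideal.Quotient.mkₐ F _).comp (FreeAlgebra.lift F ![(C X : PP F), X]), by
    rintro a b ⟨⟩
    simp only [AlgHom.comp_apply, map_mul, map_add, lift_ι_apply, Matrix.cons_val_zero,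
      Matrix.cons_val_one, Matrix.head_cons, ← Polynomial.aeval_algHom_apply]
    rw [Polynomial.aeval_algHom_apply, aeval_CX]
    have : (Ideal.Quotient.mkₐ F (Ideal.span {(C g : PP F)})) (C g) = 0 := by
      rw [Ideal.Quotient.mkₐ_eq_mk, Ideal.Quotient.eq_zero_iff_mem]
      exact Ideal.mem_span_singleton_self _
    rw [this, add_zero]
    ring⟩

lemma piQ_eq (g : F[X]) (u : AW F g) :
    piQ g u = Ideal.Quotient.mk (Ideal.span {(C g : PP F)}) (eps g u) := by
  have : (piQ g).toLinearMap
      = (Ideal.Quotient.mkₐ F (Ideal.span {(C g : PP F)})).toLinearMap.comp (eps g) := by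
    apply LinearMap.ext_on (span_top g)
    rintro z ⟨p, j, rfl⟩
    simp only [AlgHom.toLinearMap_apply, LinearMap.comp_apply, eps_basis]
    rw [map_mul, map_pow]
    have hx : piQ g (aX F g) = Ideal.Quotient.mkₐ F _ (C X : PP F) := by
      rw [aX, piQ, RingQuot.liftAlgHom_mkAlgHom_apply]
      simp [lift_ι_apply]
    have hy : piQ g (aY F g) = Ideal.Quotient.mkₐ F _ (X : PP F) := by
      rw [aY, piQ, RingQuot.liftAlgHom_mkAlgHom_apply]
      simp [lift_ι_apply]
    rw [← Polynomial.aeval_algHom_apply, hx, Polynomial.aeval_algHom_apply, aeval_CX, hy]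
    simp [map_mul, map_pow]
  exact DFunLike.congr_fun this u

lemma eps_aeval (g p : F[X]) : eps g (aeval (aX F g) p) = C p := by
  have := eps_basis g p 0
  simpa using this

/-- Main structural lemma: elements killed by the commutative quotient
are left multiples of `g(x)`. -/
lemma factor_of_piQ_eq_zero (g : F[X]) (z : AW F g) (hz : piQ g z = 0) :
    ∃ u : AW F g, z = aeval (aX F g) g * u := by
  rw [piQ_eq, Ideal.Quotient.eq_zero_iff_mem, Ideal.mem_span_singleton] at hz
  obtain ⟨w, hw⟩ := hz
  refine ⟨Psi g w, eps_inj g ?_⟩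
  rw [hw, eps_mul, rep_aeval, eps_Psi, lmul_app]

lemma comm_killed (g h : F[X]) (f : AW F h →ₐ[F] (PP F ⧸ Ideal.span {(C g : PP F)})) :
    f (aeval (aX F h) h) = 0 := by
  have hrel : aeval (aX F h) h = aY F h * aX F h - aX F h * aY F h := by
    rw [rel_AW]; exact (add_sub_cancel_left _ _).symm
  rw [hrel, map_sub, map_mul, map_mul]
  ring

end Stmt17Aux

open Stmt17Aux in
/-- If `deg h ≥ 1` and `θ : A_h → A_g` is an `F`-algebra isomorphism, then
`θ(h(x)) = λ·g(x)` for some nonzero scalar `λ`. -/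
theorem stmt17 (F : Type) [Field F] (h g : F[X]) (hdeg : 1 ≤ h.natDegree)
    (θ : AW F h ≃ₐ[F] AW F g) :
    ∃ l : F, l ≠ 0 ∧ θ (aeval (aX F h) h) = l • aeval (aX F g) g := by
  classical
  have hne : h ≠ 0 := by
    intro h0; rw [h0] at hdeg; simp at hdeg
  have hxne : aeval (aX F h) h ≠ 0 := by
    intro h0
    have := eps_aeval h h
    rw [h0, map_zero] at this
    exact hne (Polynomial.C_eq_zero.mp this.symm)
  -- θ(h(x)) = g(x) * u
  have h1 : ∃ u : AW F g, θ (aeval (aX F h) h) = aeval (aX F g) g * u := by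
    apply factor_of_piQ_eq_zero
    have := comm_killed g h ((piQ g).comp θ.toAlgHom)
    simpa using this
  obtain ⟨u, hu⟩ := h1
  -- θ⁻¹(g(x)) = h(x) * v
  have h2 : ∃ v : AW F h, θ.symm (aeval (aX F g) g) = aeval (aX F h) h * v := by
    apply factor_of_piQ_eq_zero
    have := comm_killed h g ((piQ h).comp θ.symm.toAlgHom)
    simpa using this
  obtain ⟨v, hv⟩ := h2
  have hgne : g ≠ 0 := by
    intro h0
    apply hxne
    apply θ.injective
    have hz : aeval (aX F g) g = 0 := (congrArg (aeval (aX F g)) h0).trans (map_zero _)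
    rw [hu, hz, zero_mul, map_zero]
  have hgxne : aeval (aX F g) g ≠ 0 := by
    intro h0
    have := eps_aeval g g
    rw [h0, map_zero] at this
    exact hgne (Polynomial.C_eq_zero.mp this.symm)
  -- g(x) = g(x) * (u * θ v)
  have hgx : aeval (aX F g) g = aeval (aX F g) g * (u * θ v) := by
    conv_lhs => rw [← θ.apply_symm_apply (aeval (aX F g) g), hv, map_mul, hu, mul_assoc]
  have huv : u * θ v = 1 := by
    by_contra hne1
    have : aeval (aX F g) g * (1 - u * θ v) = 0 := by
      rw [mul_sub, mul_one, ← hgx, sub_self]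
    exact AW_nzd g hgxne (sub_ne_zero_of_ne (Ne.symm hne1)) this
  obtain ⟨l, hl, hal⟩ := unit_scalar g huv
  refine ⟨l, hl, ?_⟩
  rw [hu, hal, mul_smul_comm, mul_one]
end

section
/- Let F be a field and h ∈ F[x] with deg h = n ≥ 1. Suppose (α, β) ∈ F* × F satisfies h(αx + β) = αⁿ·h(x). Then the assignment x ↦ αx + β, ŷ ↦ α^{n−1}·ŷ extends to an F-algebra automorphism τ_{α,β} of A_h, and τ_{α,β} ∘ τ_{γ,ε} = τ_{αγ, βγ+ε} whenever both pairs satisfy the condition. -/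
open Polynomial FreeAlgebra

section aux
variable {F : Type} [Field F] {h : F[X]}

lemma aw_rel : aY F h * aX F h = aX F h * aY F h + aeval (aX F h) h := by
  have := RingQuot.mkAlgHom_rel F (ahRel.rel (F := F) (h := h))
  simpa [aX, aY, map_mul, map_add, ← Polynomial.aeval_algHom_apply] using this

lemma aw_hom_ext {f g : AW F h →ₐ[F] AW F h}
    (hx : f (aX F h) = g (aX F h)) (hy : f (aY F h) = g (aY F h)) : f = g := by
  apply RingQuot.ringQuot_ext'
  apply FreeAlgebra.hom_ext
  funext i
  fin_cases i
  · simpa [aX, AlgHom.comp_apply] using hx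
  · simpa [aY] using hy

lemma aeval_shift {α β : F} (hc : h.comp (C α * X + C β) = C (α ^ h.natDegree) * h) :
    aeval (α • aX F h + algebraMap F (AW F h) β) h
      = α ^ h.natDegree • aeval (aX F h) h := by
  have e : α • aX F h + algebraMap F (AW F h) β = aeval (aX F h) (C α * X + C β) := by
    simp [Algebra.smul_def]
  rw [e, ← aeval_comp, hc, map_mul, aeval_C, Algebra.smul_def]

lemma key_rel (hdeg : 1 ≤ h.natDegree) (α β : F)
    (hc : h.comp (C α * X + C β) = C (α ^ h.natDegree) * h) :
    (α ^ (h.natDegree - 1) • aY F h) * (α • aX F h + algebraMap F (AW F h) β)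
      = (α • aX F h + algebraMap F (AW F h) β) * (α ^ (h.natDegree - 1) • aY F h)
        + aeval (α • aX F h + algebraMap F (AW F h) β) h := by
  have hp : α ^ (h.natDegree - 1) * α = α ^ h.natDegree :=
    pow_sub_one_mul (by omega) α
  rw [aeval_shift hc]
  simp only [mul_add, add_mul, smul_mul_assoc, mul_smul_comm, smul_smul, hp,
    aw_rel, smul_add, Algebra.commutes]
  rw [mul_comm α (α ^ (h.natDegree - 1)), hp]
  abel

end aux

section tau
variable {F : Type} [Field F] {h : F[X]}

noncomputable def tauHom (hdeg : 1 ≤ h.natDegree) (α β : F)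
    (hc : h.comp (C α * X + C β) = C (α ^ h.natDegree) * h) :
    AW F h →ₐ[F] AW F h :=
  RingQuot.liftAlgHom F ⟨FreeAlgebra.lift F
      ![α • aX F h + algebraMap F (AW F h) β, α ^ (h.natDegree - 1) • aY F h], by
    rintro _ _ ⟨⟩
    simp only [map_mul, map_add, FreeAlgebra.lift_ι_apply, Matrix.cons_val_zero,
      Matrix.cons_val_one, Matrix.head_cons, ← Polynomial.aeval_algHom_apply]
    exact key_rel hdeg α β hc⟩

lemma tauHom_aX (hdeg : 1 ≤ h.natDegree) (α β : F)
    (hc : h.comp (C α * X + C β) = C (α ^ h.natDegree) * h) :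
    tauHom hdeg α β hc (aX F h) = α • aX F h + algebraMap F (AW F h) β := by
  unfold tauHom
  show RingQuot.liftAlgHom F _ (RingQuot.mkAlgHom F (ahRel F h) (ι F 0)) = _
  rw [RingQuot.liftAlgHom_mkAlgHom_apply]
  simp

lemma tauHom_aY (hdeg : 1 ≤ h.natDegree) (α β : F)
    (hc : h.comp (C α * X + C β) = C (α ^ h.natDegree) * h) :
    tauHom hdeg α β hc (aY F h) = α ^ (h.natDegree - 1) • aY F h := by
  unfold tauHom
  show RingQuot.liftAlgHom F _ (RingQuot.mkAlgHom F (ahRel F h) (ι F 1)) = _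
  rw [RingQuot.liftAlgHom_mkAlgHom_apply]
  simp

lemma inv_cond (α β : F) (hα : α ≠ 0)
    (hc : h.comp (C α * X + C β) = C (α ^ h.natDegree) * h) :
    h.comp (C α⁻¹ * X + C (-β * α⁻¹)) = C (α⁻¹ ^ h.natDegree) * h := by
  have e : (C α * X + C β).comp (C α⁻¹ * X + C (-β * α⁻¹)) = X := by
    have h1 : α * α⁻¹ = 1 := mul_inv_cancel₀ hα
    have h2 : α * -β * α⁻¹ + β = 0 := by field_simp; ring
    simp only [add_comp, mul_comp, C_comp, X_comp, mul_add, ← mul_assoc, ← C_mul]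
    rw [h1, C_1, one_mul, add_assoc, ← C_add, h2, C_0, add_zero]
  have key := congrArg (fun p => p.comp (C α⁻¹ * X + C (-β * α⁻¹))) hc
  simp only [comp_assoc, e, comp_X, mul_comp, C_comp] at key
  calc h.comp (C α⁻¹ * X + C (-β * α⁻¹))
      = C (α⁻¹ ^ h.natDegree) *
          (C (α ^ h.natDegree) * h.comp (C α⁻¹ * X + C (-β * α⁻¹))) := by
        rw [← mul_assoc, ← C_mul, inv_pow, inv_mul_cancel₀ (pow_ne_zero _ hα), C_1, one_mul]
    _ = C (α⁻¹ ^ h.natDegree) * h := by rw [← key]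

end tau

/-- If `(α, β) ∈ F* × F` satisfies `h(αx + β) = α^{deg h}·h(x)` (with `deg h = n ≥ 1`),
then `x ↦ αx + β`, `ŷ ↦ α^{n−1}·ŷ` extends to an `F`-algebra automorphism `τ_{α,β}` of
`A_h`; and `τ_{α,β} ∘ τ_{γ,ε} = τ_{αγ, βγ+ε}` whenever both pairs satisfy the condition. -/
theorem stmt18 (F : Type) [Field F] (h : F[X]) (hdeg : 1 ≤ h.natDegree) :
    (∀ α β : F, α ≠ 0 → h.comp (C α * X + C β) = C (α ^ h.natDegree) * h →
      ∃ τ : AW F h ≃ₐ[F] AW F h,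
        τ (aX F h) = α • aX F h + algebraMap F (AW F h) β ∧
        τ (aY F h) = α ^ (h.natDegree - 1) • aY F h) ∧
    (∀ α β γ ε : F, α ≠ 0 → γ ≠ 0 →
      h.comp (C α * X + C β) = C (α ^ h.natDegree) * h →
      h.comp (C γ * X + C ε) = C (γ ^ h.natDegree) * h →
      ∀ τ₁ τ₂ τ₃ : AW F h ≃ₐ[F] AW F h,
        (τ₁ (aX F h) = α • aX F h + algebraMap F (AW F h) β ∧
          τ₁ (aY F h) = α ^ (h.natDegree - 1) • aY F h) →
        (τ₂ (aX F h) = γ • aX F h + algebraMap F (AW F h) ε ∧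
          τ₂ (aY F h) = γ ^ (h.natDegree - 1) • aY F h) →
        (τ₃ (aX F h) = (α * γ) • aX F h + algebraMap F (AW F h) (β * γ + ε) ∧
          τ₃ (aY F h) = (α * γ) ^ (h.natDegree - 1) • aY F h) →
        ∀ a, τ₁ (τ₂ a) = τ₃ a) := by
  constructor
  · intro α β hα hc
    have hc' := inv_cond α β hα hc
    have hz : α * (-β * α⁻¹) + β = 0 := by field_simp; ring
    have hz' : α⁻¹ * β + -β * α⁻¹ = 0 := by field_simp; ring
    refine ⟨AlgEquiv.ofAlgHom (tauHom hdeg α β hc) (tauHom hdeg α⁻¹ (-β * α⁻¹) hc')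
      ?_ ?_, ?_, ?_⟩
    · apply aw_hom_ext
      · rw [AlgHom.comp_apply, AlgHom.id_apply, tauHom_aX, map_add, map_smul, tauHom_aX,
          AlgHom.commutes, smul_add, smul_smul, inv_mul_cancel₀ hα, one_smul, add_assoc,
          Algebra.smul_def, ← map_mul, ← map_add, hz', map_zero, add_zero]
      · rw [AlgHom.comp_apply, AlgHom.id_apply, tauHom_aY, map_smul, tauHom_aY, smul_smul,
          ← mul_pow, inv_mul_cancel₀ hα, one_pow, one_smul]
    · apply aw_hom_ext
      · rw [AlgHom.comp_apply, AlgHom.id_apply, tauHom_aX, map_add, map_smul, tauHom_aX,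
          AlgHom.commutes, smul_add, smul_smul, mul_inv_cancel₀ hα, one_smul, add_assoc,
          Algebra.smul_def, ← map_mul, ← map_add, hz, map_zero, add_zero]
      · rw [AlgHom.comp_apply, AlgHom.id_apply, tauHom_aY, map_smul, tauHom_aY, smul_smul,
          ← mul_pow, mul_inv_cancel₀ hα, one_pow, one_smul]
    · exact tauHom_aX hdeg α β hc
    · exact tauHom_aY hdeg α β hc
  · intro α β γ ε hα hγ hc1 hc2 τ₁ τ₂ τ₃ ⟨h1x, h1y⟩ ⟨h2x, h2y⟩ ⟨h3x, h3y⟩ a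
    have key : (τ₁.toAlgHom.comp τ₂.toAlgHom) = τ₃.toAlgHom := by
      apply aw_hom_ext
      · simp only [AlgHom.comp_apply, AlgEquiv.toAlgHom_eq_coe, AlgHom.coe_coe]
        show τ₁ (τ₂ (aX F h)) = τ₃ (aX F h)
        rw [h2x, map_add, map_smul, h1x, AlgEquiv.commutes, h3x, smul_add, smul_smul,
          mul_comm γ α, add_assoc]
        congr 1
        rw [map_add, Algebra.smul_def, ← map_mul, mul_comm γ β]
      · simp only [AlgHom.comp_apply, AlgEquiv.toAlgHom_eq_coe, AlgHom.coe_coe]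
        show τ₁ (τ₂ (aY F h)) = τ₃ (aY F h)
        rw [h2y, map_smul, h1y, h3y, smul_smul, ← mul_pow, mul_comm γ α]
    have := DFunLike.congr_fun key a
    simpa using this
end

section
/- Let F be a field of characteristic p > 0, h ∈ F[x] with deg h ≥ 1, and c an element of the centralizer of x in A_h (i.e. c ∈ F[x, hᵖyᵖ]) with c ∉ F[x]. Then the F-algebra endomorphism κ_c of A_h determined by κ_c(x) = x and κ_c(ŷ) = ŷ + c is injective but not surjective; hence A_h admits injective endomorphisms that are not automorphisms. -/
open Polynomial FreeAlgebra

namespace S19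

variable (F : Type) [Field F] (h : F[X])

theorem rel1 : aY F h * aX F h = aX F h * aY F h + aeval (aX F h) h := by
  have := RingQuot.mkAlgHom_rel F (ahRel.rel (F := F) (h := h))
  simpa [aX, aY, map_mul, map_add, ← Polynomial.aeval_algHom_apply] using this

theorem acomm (u v : F[X]) :
    aeval (aX F h) u * aeval (aX F h) v = aeval (aX F h) v * aeval (aX F h) u := by
  rw [← map_mul, ← map_mul, mul_comm]

theorem x_comm_aeval (g : F[X]) :
    aX F h * aeval (aX F h) g = aeval (aX F h) g * aX F h := by
  have := acomm F h X g
  simpa [Polynomial.aeval_X] using this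

theorem y_comm_aeval (g : F[X]) :
    aY F h * aeval (aX F h) g
      = aeval (aX F h) g * aY F h + aeval (aX F h) (h * derivative g) := by
  induction g using Polynomial.induction_on with
  | C a =>
      simp [Polynomial.aeval_C, Algebra.commutes]
  | add p q hp hq =>
      rw [map_add, mul_add, hp, hq, map_add, add_mul, mul_add, map_add]
      abel
  | monomial n a ih =>
      have e1 : (C a * X ^ (n + 1) : F[X]) = (C a * X ^ n) * X := by ring
      have e2 : (h * derivative (C a * X ^ n * X) : F[X])
          = (h * derivative (C a * X ^ n)) * X + (C a * X ^ n) * h := by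
        rw [derivative_mul, derivative_X]; ring
      rw [e1, map_mul (aeval (aX F h)) (C a * X ^ n) X, Polynomial.aeval_X, e2,
        map_add, map_mul (aeval (aX F h)) (h * derivative (C a * X ^ n)) X,
        Polynomial.aeval_X, map_mul (aeval (aX F h)) (C a * X ^ n) h]
      calc aY F h * (aeval (aX F h) (C a * X ^ n) * aX F h)
          = (aeval (aX F h) (C a * X ^ n) * aY F h
              + aeval (aX F h) (h * derivative (C a * X ^ n))) * aX F h := by
            rw [← mul_assoc, ih]
        _ = aeval (aX F h) (C a * X ^ n) * (aY F h * aX F h)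
              + aeval (aX F h) (h * derivative (C a * X ^ n)) * aX F h := by
            rw [add_mul, mul_assoc]
        _ = aeval (aX F h) (C a * X ^ n) * (aX F h * aY F h)
              + (aeval (aX F h) (h * derivative (C a * X ^ n)) * aX F h
                + aeval (aX F h) (C a * X ^ n) * aeval (aX F h) h) := by
            rw [rel1, mul_add]; abel
        _ = _ := by rw [← mul_assoc, acomm F h (C a * X ^ n) h]

/-- Coefficientwise `g ↦ h * g'` on `F[X][Y]`. -/
noncomputable def Dop : Polynomial F[X] →ₗ[F] Polynomial F[X] where
  toFun f := f.sum fun j g => monomial j (h * derivative g)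
  map_add' f g := by
    apply Polynomial.sum_add_index
    · intro i; simp
    · intro a b₁ b₂; rw [derivative_add, mul_add, map_add]
  map_smul' a f := by
    rw [RingHom.id_apply, Polynomial.smul_sum,
      Polynomial.sum_smul_index' (hf := fun i => by simp)]
    exact Finset.sum_congr rfl fun j _ => by
      dsimp only
      rw [derivative_smul, mul_smul_comm, Polynomial.smul_monomial]


theorem Dop_monomial (j : ℕ) (g : F[X]) :
    Dop F h (monomial j g) = monomial j (h * derivative g) := by
  simp only [Dop, LinearMap.coe_mk, AddHom.coe_mk]
  rw [Polynomial.sum_monomial_index]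
  simp

theorem Dop_coeff (f : Polynomial F[X]) (k : ℕ) :
    (Dop F h f).coeff k = h * derivative (f.coeff k) := by
  induction f using Polynomial.induction_on' with
  | add p q hp hq => rw [map_add, coeff_add, hp, hq, coeff_add, derivative_add, mul_add]
  | monomial n a =>
      rw [Dop_monomial, coeff_monomial, coeff_monomial]
      split <;> simp

/-- The normal form map `F[X][Y] → A_h`, `∑ gⱼ Yʲ ↦ ∑ gⱼ(x) yʲ`. -/
noncomputable def psi : Polynomial F[X] →ₗ[F] AW F h where
  toFun f := f.sum fun j g => aeval (aX F h) g * aY F h ^ j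
  map_add' f g := by
    apply Polynomial.sum_add_index
    · intro i; simp
    · intro a b₁ b₂; rw [map_add, add_mul]
  map_smul' a f := by
    rw [RingHom.id_apply, Polynomial.smul_sum,
      Polynomial.sum_smul_index' (hf := fun i => by simp)]
    exact Finset.sum_congr rfl fun j _ => by
      dsimp only
      rw [map_smul, smul_mul_assoc]

theorem psi_monomial (j : ℕ) (g : F[X]) :
    psi F h (monomial j g) = aeval (aX F h) g * aY F h ^ j := by
  simp only [psi, LinearMap.coe_mk, AddHom.coe_mk]
  rw [Polynomial.sum_monomial_index]
  simp

theorem psi_one : psi F h 1 = 1 := by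
  have : (1 : Polynomial F[X]) = monomial 0 1 := by simp
  rw [this, psi_monomial]; simp

/-- Left multiplication by elements of `F[X]` (as constants) on `F[X][Y]`. -/
noncomputable def lC : F[X] →ₐ[F] Module.End F (Polynomial F[X]) :=
  (Algebra.lmul F (Polynomial F[X])).comp
    ((Polynomial.CAlgHom : F[X] →ₐ[F[X]] Polynomial F[X]).restrictScalars F)

theorem lC_apply (g : F[X]) (f : Polynomial F[X]) : lC F g f = C g * f := rfl

/-- The operator representing `y`. -/
noncomputable def ly : Module.End F (Polynomial F[X]) :=
  Algebra.lmul F (Polynomial F[X]) X + Dop F h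

theorem ly_apply (f : Polynomial F[X]) : ly F h f = X * f + Dop F h f := rfl

theorem Dop_C_mul (g : F[X]) (f : Polynomial F[X]) :
    Dop F h (C g * f) = C g * Dop F h f + C (h * derivative g) * f := by
  induction f using Polynomial.induction_on' with
  | add p q hp hq =>
      rw [mul_add, map_add, hp, hq, map_add]
      ring
  | monomial j a =>
      rw [Polynomial.C_mul_monomial, Dop_monomial, Dop_monomial,
        Polynomial.C_mul_monomial, Polynomial.C_mul_monomial, ← map_add]
      congr 1
      rw [derivative_mul]
      ring

theorem ly_lC (g : F[X]) :
    ly F h * lC F g = lC F g * ly F h + lC F (h * derivative g) := by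
  refine LinearMap.ext fun f => ?_
  show ly F h (lC F g f) = lC F g (ly F h f) + lC F (h * derivative g) f
  rw [lC_apply, ly_apply, lC_apply, ly_apply, lC_apply, Dop_C_mul]
  ring

/-- The representation of `A_h` on `F[X][Y]`. -/
noncomputable def rho : AW F h →ₐ[F] Module.End F (Polynomial F[X]) :=
  RingQuot.liftAlgHom F ⟨FreeAlgebra.lift F ![lC F X, ly F h], by
    rintro _ _ ⟨⟩
    simp only [map_mul, map_add, FreeAlgebra.lift_ι_apply, Matrix.cons_val_zero,
      Matrix.cons_val_one, Matrix.head_cons, ← Polynomial.aeval_algHom_apply]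
    rw [Polynomial.aeval_algHom_apply (lC F) X h, Polynomial.aeval_X_left_apply,
      ly_lC F h X]
    simp⟩

theorem rho_x : rho F h (aX F h) = lC F X := by
  rw [rho, aX, RingQuot.liftAlgHom_mkAlgHom_apply, FreeAlgebra.lift_ι_apply]
  simp

theorem rho_y : rho F h (aY F h) = ly F h := by
  rw [rho, aY, RingQuot.liftAlgHom_mkAlgHom_apply, FreeAlgebra.lift_ι_apply]
  simp

theorem rho_aeval (g : F[X]) : rho F h (aeval (aX F h) g) = lC F g := by
  rw [← Polynomial.aeval_algHom_apply, rho_x]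
  rw [Polynomial.aeval_algHom_apply (lC F) X g, Polynomial.aeval_X_left_apply]

/-- The normal form: `ν a = ρ(a)(1)`. -/
noncomputable def nu (a : AW F h) : Polynomial F[X] := rho F h a 1

theorem nu_psi (f : Polynomial F[X]) : nu F h (psi F h f) = f := by
  induction f using Polynomial.induction_on' with
  | add p q hp hq => rw [map_add, nu, map_add, LinearMap.add_apply, ← nu, ← nu, hp, hq]
  | monomial j g =>
      rw [psi_monomial, nu, map_mul, map_pow, rho_aeval, rho_y,
        Module.End.mul_apply]
      have hpow : ∀ j : ℕ, (ly F h ^ j) (1 : Polynomial F[X]) = X ^ j := by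
        intro j
        induction j with
        | zero => simp
        | succ n ihn =>
            rw [pow_succ', Module.End.mul_apply, ihn, ly_apply,
              Polynomial.X_pow_eq_monomial, Dop_monomial]
            simp [← pow_succ', Polynomial.X_pow_eq_monomial]
      rw [hpow, lC_apply, Polynomial.C_mul_X_pow_eq_monomial]

theorem x_mul_psi (f : Polynomial F[X]) :
    aX F h * psi F h f = psi F h (C X * f) := by
  induction f using Polynomial.induction_on' with
  | add p q hp hq => rw [map_add, mul_add, hp, hq, mul_add, map_add]
  | monomial j g =>
      rw [psi_monomial, Polynomial.C_mul_monomial, psi_monomial, ← mul_assoc]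
      congr 1
      rw [map_mul, Polynomial.aeval_X]

theorem y_mul_psi (f : Polynomial F[X]) :
    aY F h * psi F h f = psi F h (ly F h f) := by
  induction f using Polynomial.induction_on' with
  | add p q hp hq => rw [map_add, mul_add, hp, hq, map_add, map_add]
  | monomial j g =>
      rw [psi_monomial, ly_apply, Polynomial.X_mul_monomial, Dop_monomial, map_add,
        psi_monomial, psi_monomial, ← mul_assoc, y_comm_aeval, add_mul, mul_assoc,
        ← pow_succ']

theorem psi_surjective : Function.Surjective (psi F h) := by
  have key : ∀ a : AW F h, ∀ s ∈ LinearMap.range (psi F h),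
      a * s ∈ LinearMap.range (psi F h) := by
    have base : ∀ z : FreeAlgebra F (Fin 2), ∀ s ∈ LinearMap.range (psi F h),
        RingQuot.mkAlgHom F (ahRel F h) z * s ∈ LinearMap.range (psi F h) := by
      intro z
      induction z using FreeAlgebra.induction with
      | grade0 r =>
          intro s hs
          rw [AlgHom.commutes, Algebra.algebraMap_eq_smul_one, smul_mul_assoc, one_mul]
          exact Submodule.smul_mem _ _ hs
      | grade1 i =>
          intro s hs
          obtain ⟨f, rfl⟩ := hs
          fin_cases i
          · exact ⟨C X * f, (x_mul_psi F h f).symm⟩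
          · exact ⟨ly F h f, (y_mul_psi F h f).symm⟩
      | mul a b ha hb =>
          intro s hs
          rw [map_mul, mul_assoc]
          exact ha _ (hb _ hs)
      | add a b ha hb =>
          intro s hs
          rw [map_add, add_mul]
          exact Submodule.add_mem _ (ha _ hs) (hb _ hs)
    intro a s hs
    obtain ⟨z, rfl⟩ := RingQuot.mkAlgHom_surjective F (ahRel F h) a
    exact base z s hs
  intro a
  have h1 : (1 : AW F h) ∈ LinearMap.range (psi F h) := ⟨1, psi_one F h⟩
  have := key a 1 h1
  rw [mul_one] at this
  exact this

theorem psi_nu (a : AW F h) : psi F h (nu F h a) = a := by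
  obtain ⟨f, rfl⟩ := psi_surjective F h a
  rw [nu_psi]

theorem nu_injective : Function.Injective (nu F h) := by
  intro a b hab
  rw [← psi_nu F h a, ← psi_nu F h b, hab]

theorem nu_aeval (g : F[X]) : nu F h (aeval (aX F h) g) = C g := by
  have : aeval (aX F h) g = psi F h (monomial 0 g) := by rw [psi_monomial, pow_zero, mul_one]
  rw [this, nu_psi, ← Polynomial.C_mul_X_pow_eq_monomial, pow_zero, mul_one]

theorem aeval_x_injective : Function.Injective (fun g : F[X] => aeval (aX F h) g) := by
  intro g₁ g₂ hg
  have := congrArg (nu F h) hg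
  rw [nu_aeval, nu_aeval] at this
  exact Polynomial.C_injective this

theorem ly_pow_deg (j : ℕ) :
    ∀ (g : Polynomial F[X]) (n : ℕ), g.natDegree ≤ n →
      ((ly F h ^ j) g).natDegree ≤ n + j ∧ ((ly F h ^ j) g).coeff (n + j) = g.coeff n := by
  induction j with
  | zero => intro g n hg; simp [hg]
  | succ m ih =>
      intro g n hg
      have hstep : (ly F h ^ (m + 1)) g = (ly F h ^ m) (ly F h g) := by
        rw [pow_succ, Module.End.mul_apply]
      have hdeg : (ly F h g).natDegree ≤ n + 1 := by
        rw [ly_apply]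
        refine (natDegree_add_le _ _).trans (max_le ?_ ?_)
        · refine natDegree_mul_le.trans ?_
          have hx1 : (X : Polynomial F[X]).natDegree ≤ 1 := natDegree_X_le
          omega
        · have hD : (Dop F h g).natDegree ≤ n := natDegree_le_iff_coeff_eq_zero.mpr
            fun N hN => by
              rw [Dop_coeff, coeff_eq_zero_of_natDegree_lt (lt_of_le_of_lt hg hN)]; simp
          omega
      have hcoeff : (ly F h g).coeff (n + 1) = g.coeff n := by
        rw [ly_apply, coeff_add, Polynomial.coeff_X_mul, Dop_coeff,
          coeff_eq_zero_of_natDegree_lt (lt_of_le_of_lt hg (Nat.lt_succ_self n))]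
        simp
      obtain ⟨H1, H2⟩ := ih (ly F h g) (n + 1) hdeg
      rw [hstep]
      constructor
      · exact H1.trans (by omega)
      · have heq : n + (m + 1) = n + 1 + m := by omega
        rw [heq, H2]
        exact hcoeff

theorem nu_mul (a b : AW F h) : nu F h (a * b) = rho F h a (nu F h b) := by
  rw [nu, map_mul, Module.End.mul_apply]; rfl

theorem rho_psi_apply (f g : Polynomial F[X]) :
    rho F h (psi F h f) g = ∑ j ∈ f.support, C (f.coeff j) * ((ly F h ^ j) g) := by
  have : psi F h f = ∑ j ∈ f.support, aeval (aX F h) (f.coeff j) * aY F h ^ j := rfl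
  rw [this, map_sum, LinearMap.sum_apply]
  refine Finset.sum_congr rfl fun j _ => ?_
  rw [map_mul, map_pow, rho_aeval, rho_y, Module.End.mul_apply, lC_apply]

theorem nu_mul_natDegree_le (a b : AW F h) :
    (nu F h (a * b)).natDegree ≤ (nu F h a).natDegree + (nu F h b).natDegree := by
  rw [nu_mul, ← psi_nu F h a, nu_psi, rho_psi_apply]
  refine natDegree_sum_le_of_forall_le _ _ fun j hj => ?_
  refine natDegree_mul_le.trans ?_
  have h1 := (ly_pow_deg F h j (nu F h b) (nu F h b).natDegree le_rfl).1
  have h2 := le_natDegree_of_mem_supp j hj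
  calc (C ((nu F h a).coeff j)).natDegree + ((ly F h ^ j) (nu F h b)).natDegree
      ≤ 0 + ((nu F h b).natDegree + j) := add_le_add (by simp) h1
    _ ≤ _ := by omega

theorem nu_mul_coeff (a b : AW F h) :
    (nu F h (a * b)).coeff ((nu F h a).natDegree + (nu F h b).natDegree)
      = (nu F h a).leadingCoeff * (nu F h b).leadingCoeff := by
  rw [nu_mul, ← psi_nu F h a, nu_psi, rho_psi_apply, finset_sum_coeff]
  rw [Finset.sum_eq_single (nu F h a).natDegree]
  · rw [coeff_C_mul, add_comm ((nu F h a).natDegree),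
      (ly_pow_deg F h _ (nu F h b) (nu F h b).natDegree le_rfl).2]
    rfl
  · intro j hj hne
    have hjlt : j < (nu F h a).natDegree :=
      lt_of_le_of_ne (le_natDegree_of_mem_supp j hj) hne
    have hz : ((ly F h ^ j) (nu F h b)).coeff
        ((nu F h a).natDegree + (nu F h b).natDegree) = 0 :=
      coeff_eq_zero_of_natDegree_lt
        (lt_of_le_of_lt (ly_pow_deg F h j (nu F h b) (nu F h b).natDegree le_rfl).1
          (by omega))
    rw [coeff_C_mul, hz, mul_zero]
  · intro hns
    rw [notMem_support_iff.mp hns]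
    simp

theorem nu_mul_props (a b : AW F h) (ha : nu F h a ≠ 0) (hb : nu F h b ≠ 0) :
    nu F h (a * b) ≠ 0 ∧
    (nu F h (a * b)).natDegree = (nu F h a).natDegree + (nu F h b).natDegree ∧
    (nu F h (a * b)).leadingCoeff = (nu F h a).leadingCoeff * (nu F h b).leadingCoeff := by
  have hco := nu_mul_coeff F h a b
  have hne : (nu F h a).leadingCoeff * (nu F h b).leadingCoeff ≠ 0 :=
    mul_ne_zero (leadingCoeff_ne_zero.mpr ha) (leadingCoeff_ne_zero.mpr hb)
  have hcne : (nu F h (a * b)).coeff ((nu F h a).natDegree + (nu F h b).natDegree) ≠ 0 := by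
    rw [hco]; exact hne
  have hnz : nu F h (a * b) ≠ 0 := fun H => by rw [H] at hcne; simp at hcne
  have hdeg : (nu F h (a * b)).natDegree
      = (nu F h a).natDegree + (nu F h b).natDegree :=
    le_antisymm (nu_mul_natDegree_le F h a b) (le_natDegree_of_ne_zero hcne)
  exact ⟨hnz, hdeg, by rw [leadingCoeff, hdeg, hco]⟩

theorem nu_y : nu F h (aY F h) = X := by
  rw [nu, rho_y, ly_apply]
  have : (1 : Polynomial F[X]) = monomial 0 1 := by simp
  rw [this, Dop_monomial]
  simp

section kappa

variable (c : AW F h) (hc : c * aX F h = aX F h * c)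

/-- The endomorphism `κ_c`. -/
noncomputable def kap : AW F h →ₐ[F] AW F h :=
  RingQuot.liftAlgHom F ⟨FreeAlgebra.lift F ![aX F h, aY F h + c], by
    rintro _ _ ⟨⟩
    simp only [map_mul, map_add, FreeAlgebra.lift_ι_apply, Matrix.cons_val_zero,
      Matrix.cons_val_one, Matrix.head_cons]
    rw [← Polynomial.aeval_algHom_apply (FreeAlgebra.lift F ![aX F h, aY F h + c])
      (ι F 0) h, FreeAlgebra.lift_ι_apply]
    simp only [Matrix.cons_val_zero]
    rw [add_mul, mul_add, rel1 F h, hc]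
    abel⟩

theorem kap_x : kap F h c hc (aX F h) = aX F h := by
  conv_lhs => rw [show aX F h = RingQuot.mkAlgHom F (ahRel F h) (ι F 0) from rfl, kap,
    RingQuot.liftAlgHom_mkAlgHom_apply, FreeAlgebra.lift_ι_apply]
  simp

theorem kap_y : kap F h c hc (aY F h) = aY F h + c := by
  conv_lhs => rw [show aY F h = RingQuot.mkAlgHom F (ahRel F h) (ι F 1) from rfl, kap,
    RingQuot.liftAlgHom_mkAlgHom_apply, FreeAlgebra.lift_ι_apply]
  simp

theorem kap_aeval (g : F[X]) :
    kap F h c hc (aeval (aX F h) g) = aeval (aX F h) g := by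
  rw [← Polynomial.aeval_algHom_apply, kap_x]

end kappa

theorem nu_add (a b : AW F h) : nu F h (a + b) = nu F h a + nu F h b := by
  rw [nu, map_add, LinearMap.add_apply]; rfl

theorem nu_zero : nu F h 0 = 0 := by
  rw [nu, map_zero]; rfl

theorem nu_one : nu F h 1 = 1 := by
  rw [nu, map_one (rho F h), Module.End.one_apply]

theorem nu_finset_sum {ι : Type} (s : Finset ι) (f : ι → AW F h) :
    nu F h (∑ i ∈ s, f i) = ∑ i ∈ s, nu F h (f i) := by
  rw [nu, map_sum, LinearMap.sum_apply]; rfl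

theorem nu_eq_zero_iff (a : AW F h) : nu F h a = 0 ↔ a = 0 := by
  constructor
  · intro H
    exact nu_injective F h (show nu F h a = nu F h 0 by rw [H, nu_zero])
  · rintro rfl; exact nu_zero F h

section main

variable (c : AW F h) (hc : c * aX F h = aX F h * c)

theorem gamma_deg (hcc : c * aX F h = aX F h * c) (hdeg : 1 ≤ h.natDegree)
    (hc' : c ∉ Set.range (fun f : F[X] => aeval (aX F h) f)) :
    2 ≤ (nu F h c).natDegree := by
  by_contra hlt
  push_neg at hlt
  have hle : (nu F h c).natDegree ≤ 1 := by omega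
  have hrep := eq_X_add_C_of_natDegree_le_one hle
  set g1 := (nu F h c).coeff 1 with hg1
  set g0 := (nu F h c).coeff 0 with hg0
  have hcform : c = aeval (aX F h) g1 * aY F h + aeval (aX F h) g0 := by
    conv_lhs => rw [← psi_nu F h c, hrep]
    rw [map_add, Polynomial.C_mul_X_eq_monomial, psi_monomial, pow_one,
      ← Polynomial.monomial_zero_left, psi_monomial, pow_zero, mul_one]
  -- deduce g1 * h = 0
  have t1 : (aeval (aX F h) g1 * aY F h + aeval (aX F h) g0) * aX F h
      = aeval (aX F h) g1 * aX F h * aY F h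
        + (aeval (aX F h) g1 * aeval (aX F h) h + aeval (aX F h) g0 * aX F h) := by
    rw [add_mul, mul_assoc, rel1, mul_add, ← mul_assoc, add_assoc]
  have t2 : aX F h * (aeval (aX F h) g1 * aY F h + aeval (aX F h) g0)
      = aeval (aX F h) g1 * aX F h * aY F h + aeval (aX F h) g0 * aX F h := by
    rw [mul_add, ← mul_assoc, x_comm_aeval F h g1, x_comm_aeval F h g0]
  have e := hcc
  rw [hcform, t1, t2] at e
  have key0 : aeval (aX F h) g1 * aeval (aX F h) h = 0 := by
    have e' := add_left_cancel e
    have e'' : aeval (aX F h) g1 * aeval (aX F h) h + aeval (aX F h) g0 * aX F h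
        = 0 + aeval (aX F h) g0 * aX F h := by rw [zero_add]; exact e'
    exact add_right_cancel e''
  have g1h : g1 * h = 0 := by
    apply aeval_x_injective F h
    show aeval (aX F h) (g1 * h) = aeval (aX F h) 0
    rw [map_mul, map_zero]
    exact key0
  have hh : h ≠ 0 := fun H0 => by rw [H0, natDegree_zero] at hdeg; omega
  have hg1z : g1 = 0 := by
    rcases mul_eq_zero.mp g1h with H | H
    · exact H
    · exact absurd H hh
  apply hc'
  refine ⟨g0, ?_⟩
  show aeval (aX F h) g0 = c
  rw [hcform, hg1z, map_zero, zero_mul, zero_add]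


theorem nu_kap (hcc : c * aX F h = aX F h * c) (a : AW F h) :
    nu F h (kap F h c hcc a)
      = ∑ j ∈ (nu F h a).support,
          nu F h (aeval (aX F h) ((nu F h a).coeff j) * (aY F h + c) ^ j) := by
  conv_lhs => rw [← psi_nu F h a]
  have hpsi : psi F h (nu F h a)
      = ∑ j ∈ (nu F h a).support,
          aeval (aX F h) ((nu F h a).coeff j) * aY F h ^ j := rfl
  rw [hpsi, map_sum, nu_finset_sum]
  refine Finset.sum_congr rfl fun j _ => ?_
  rw [map_mul, map_pow, kap_aeval, kap_y]

theorem master (hcc : c * aX F h = aX F h * c) (hdeg : 1 ≤ h.natDegree)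
    (hc' : c ∉ Set.range (fun f : F[X] => aeval (aX F h) f)) :
    Function.Injective (kap F h c hcc) ∧ ¬ Function.Surjective (kap F h c hcc) := by
  have hγ2 : 2 ≤ (nu F h c).natDegree := gamma_deg F h c hcc hdeg hc'
  have hγ0 : nu F h c ≠ 0 := fun H => by rw [H, natDegree_zero] at hγ2; omega
  have hw : nu F h (aY F h + c) = X + nu F h c := by rw [nu_add, nu_y]
  have hXlt : (X : Polynomial F[X]).natDegree < (nu F h c).natDegree := by
    rw [natDegree_X]; omega
  have he : (nu F h (aY F h + c)).natDegree = (nu F h c).natDegree := by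
    rw [hw]; exact natDegree_add_eq_right_of_natDegree_lt hXlt
  have he2 : 2 ≤ (nu F h (aY F h + c)).natDegree := by rw [he]; exact hγ2
  have hL : (nu F h (aY F h + c)).leadingCoeff = (nu F h c).leadingCoeff := by
    rw [leadingCoeff, he, hw, coeff_add, Polynomial.coeff_X, if_neg (by omega),
      zero_add, leadingCoeff]
  have hL0 : (nu F h (aY F h + c)).leadingCoeff ≠ 0 := by
    rw [hL]; exact leadingCoeff_ne_zero.mpr hγ0
  have hwne : nu F h (aY F h + c) ≠ 0 := fun H => by
    rw [H, natDegree_zero] at he2; omega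
  set e := (nu F h (aY F h + c)).natDegree with hedef
  set L := (nu F h (aY F h + c)).leadingCoeff with hLdef
  have wpow : ∀ j : ℕ, nu F h ((aY F h + c) ^ j) ≠ 0 ∧
      (nu F h ((aY F h + c) ^ j)).natDegree = j * e ∧
      (nu F h ((aY F h + c) ^ j)).leadingCoeff = L ^ j := by
    intro j
    induction j with
    | zero => rw [pow_zero, nu_one]; simp
    | succ n ihn =>
        obtain ⟨i1, i2, i3⟩ := ihn
        obtain ⟨m1, m2, m3⟩ := nu_mul_props F h ((aY F h + c) ^ n) (aY F h + c) i1 hwne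
        refine ⟨by rw [pow_succ]; exact m1, ?_, ?_⟩
        · rw [pow_succ, m2, i2]; ring
        · rw [pow_succ, m3, i3, ← pow_succ]
  have key : ∀ a : AW F h,
      (nu F h (kap F h c hcc a)).coeff ((nu F h a).natDegree * e)
        = (nu F h a).leadingCoeff * L ^ (nu F h a).natDegree := by
    intro a
    rw [nu_kap F h c hcc a, finset_sum_coeff]
    rw [Finset.sum_eq_single (nu F h a).natDegree]
    · by_cases h0 : (nu F h a).leadingCoeff = 0
      · have hcoe : (nu F h a).coeff (nu F h a).natDegree = 0 := h0
        rw [hcoe, map_zero, zero_mul, nu_zero, coeff_zero, h0, zero_mul]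
      · have hCne : nu F h (aeval (aX F h)
            ((nu F h a).coeff (nu F h a).natDegree)) ≠ 0 := by
          rw [nu_aeval]
          simpa using h0
        obtain ⟨m1, m2, m3⟩ := nu_mul_props F h
          (aeval (aX F h) ((nu F h a).coeff (nu F h a).natDegree))
          ((aY F h + c) ^ (nu F h a).natDegree) hCne (wpow (nu F h a).natDegree).1
        rw [nu_aeval, natDegree_C, zero_add, (wpow (nu F h a).natDegree).2.1] at m2
        rw [nu_aeval, leadingCoeff_C, (wpow (nu F h a).natDegree).2.2] at m3
        rw [← m2, ← leadingCoeff, m3]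
        rfl
    · intro j hj hne
      have hjlt : j < (nu F h a).natDegree :=
        lt_of_le_of_ne (le_natDegree_of_mem_supp j hj) hne
      apply coeff_eq_zero_of_natDegree_lt
      have hle := nu_mul_natDegree_le F h
        (aeval (aX F h) ((nu F h a).coeff j)) ((aY F h + c) ^ j)
      rw [nu_aeval, natDegree_C, zero_add, (wpow j).2.1] at hle
      refine lt_of_le_of_lt hle ?_
      have : 0 < e := by omega
      exact (Nat.mul_lt_mul_right this).mpr hjlt
    · intro hns
      rw [notMem_support_iff.mp hns, map_zero, zero_mul, nu_zero, coeff_zero]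
  constructor
  · refine (injective_iff_map_eq_zero (kap F h c hcc)).mpr fun a ha => ?_
    by_contra hne
    have hνa : nu F h a ≠ 0 := fun H => hne ((nu_eq_zero_iff F h a).mp H)
    have h1 := key a
    rw [ha, nu_zero, coeff_zero] at h1
    exact (mul_ne_zero (leadingCoeff_ne_zero.mpr hνa) (pow_ne_zero _ hL0)) h1.symm
  · intro hs
    obtain ⟨a, ha⟩ := hs (aY F h)
    by_cases h0 : a = 0
    · rw [h0, map_zero] at ha
      have hXz := congrArg (nu F h) ha
      rw [nu_zero, nu_y] at hXz
      exact X_ne_zero hXz.symm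
    · have hνa : nu F h a ≠ 0 := fun H => h0 ((nu_eq_zero_iff F h a).mp H)
      have h1 := key a
      rw [ha, nu_y] at h1
      have hne1 : (1 : ℕ) ≠ (nu F h a).natDegree * e := by
        intro H
        rcases Nat.eq_zero_or_pos (nu F h a).natDegree with h00 | h01
        · rw [h00, zero_mul] at H; omega
        · have hee : e ≤ (nu F h a).natDegree * e := Nat.le_mul_of_pos_left e h01
          omega
      rw [Polynomial.coeff_X, if_neg hne1] at h1
      exact (mul_ne_zero (leadingCoeff_ne_zero.mpr hνa) (pow_ne_zero _ hL0)) h1.symm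

end main

end S19

/-- In characteristic `p > 0` with `deg h ≥ 1`: if `c` centralizes `x` in `A_h` but
`c ∉ F[x]`, then the endomorphism `κ_c` of `A_h` with `κ_c(x) = x`, `κ_c(ŷ) = ŷ + c` is
injective but not surjective; hence `A_h` has injective endomorphisms that are not
automorphisms. -/
theorem stmt19 (F : Type) [Field F] (p : ℕ) [Fact p.Prime] [CharP F p] (h : F[X])
    (hdeg : 1 ≤ h.natDegree) (c : AW F h)
    (hc : c * aX F h = aX F h * c)
    (hc' : c ∉ Set.range (fun f : F[X] => aeval (aX F h) f)) :
    ∃ κ : AW F h →ₐ[F] AW F h,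
      κ (aX F h) = aX F h ∧ κ (aY F h) = aY F h + c ∧
      Function.Injective κ ∧ ¬ Function.Surjective κ := by
  obtain ⟨hinj, hnsurj⟩ := S19.master F h c hc hdeg hc'
  exact ⟨S19.kap F h c hc, S19.kap_x F h c hc, S19.kap_y F h c hc, hinj, hnsurj⟩
end
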